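/- arXiv:2202.01001 — 2 statements merged into one kernel-verified Lean document; each statement's English description precedes it below -/
import Mathlib

section
/- The double integral ∫₀^{π/2} sin(x) · (∫ₓ^{π/2} 1/sin(t) dt) dx equals ln 2. -/
/-!
Since `log (tan (x / 2))` is a primitive of `1 / sin`, the inner integral is `-log (tan (x / 2))`,
which has a logarithmic singularity at `0`. Integrating by parts against `1 - cos x` instead of
`-cos x` kills the boundary term at `0`, because `(1 - cos x) log (tan (x / 2))
= sin x · tan (x / 2) log (tan (x / 2)) → 0`. What remains is
`∫₀^{π/2} (1 - cos x) / sin x dx = ∫₀^{π/2} tan (x / 2) dx = [-2 log (cos (x / 2))]₀^{π/2} = log 2`.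
-/

open Real Set MeasureTheory intervalIntegral

lemma sin_half_ne_zero_and_cos_half_ne_zero {x : ℝ} (hx : sin x ≠ 0) :
    sin (x / 2) ≠ 0 ∧ cos (x / 2) ≠ 0 := by
  rw [← mul_div_cancel₀ x two_ne_zero, sin_two_mul] at hx
  exact ⟨right_ne_zero_of_mul (left_ne_zero_of_mul hx), right_ne_zero_of_mul hx⟩

lemma hasDerivAt_log_tan_half {x : ℝ} (hx : sin x ≠ 0) :
    HasDerivAt (fun y => log (tan (y / 2))) (1 / sin x) x := by
  obtain ⟨hs, hc⟩ := sin_half_ne_zero_and_cos_half_ne_zero hx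
  have htan : tan (x / 2) ≠ 0 := by rw [tan_eq_sin_div_cos]; exact div_ne_zero hs hc
  have hdiv : HasDerivAt (fun y : ℝ => y / 2) (1 / 2) x := (hasDerivAt_id x).div_const 2
  have htan' : HasDerivAt (fun y => tan (y / 2)) (1 / cos (x / 2) ^ 2 * (1 / 2)) x :=
    (hasDerivAt_tan hc).comp (h₂ := tan) x hdiv
  convert htan'.log htan using 1
  rw [tan_eq_sin_div_cos, show sin x = sin (2 * (x / 2)) by ring_nf, sin_two_mul]
  field_simp

lemma integral_one_div_sin {a b : ℝ} (h : ∀ t ∈ uIcc a b, sin t ≠ 0) :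
    ∫ t in a..b, 1 / sin t = log (tan (b / 2)) - log (tan (a / 2)) :=
  integral_eq_sub_of_hasDerivAt (fun t ht => hasDerivAt_log_tan_half (h t ht))
    (continuousOn_const.div continuous_sin.continuousOn h).intervalIntegrable

lemma integral_one_div_sin_to_pi_div_two {x : ℝ} (h0 : 0 < x) (h1 : x ≤ π / 2) :
    ∫ t in x..π / 2, 1 / sin t = -log (tan (x / 2)) := by
  rw [integral_one_div_sin, show π / 2 / 2 = π / 4 by ring, tan_pi_div_four, log_one, zero_sub]
  rw [uIcc_of_le h1]
  exact fun t ht => (sin_pos_of_pos_of_lt_pi (h0.trans_le ht.1) (by linarith [ht.2])).ne'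

lemma one_sub_cos_eq_sin_mul_tan_half {x : ℝ} (hx : cos (x / 2) ≠ 0) :
    1 - cos x = sin x * tan (x / 2) := by
  have h2 : x = 2 * (x / 2) := by ring
  rw [h2, cos_two_mul, sin_two_mul, ← h2, tan_eq_sin_div_cos]
  field_simp
  linear_combination (-2) * sin_sq_add_cos_sq (x / 2)

lemma log_tan_nonpos {x : ℝ} (h0 : 0 ≤ x) (h1 : x ≤ π / 4) : log (tan x) ≤ 0 := by
  have hπ := pi_pos
  refine log_nonpos (tan_nonneg_of_nonneg_of_le_pi_div_two h0 (by linarith)) ?_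
  rw [← tan_pi_div_four]
  rcases h1.lt_or_eq with h1 | rfl
  · exact (tan_lt_tan_of_nonneg_of_lt_pi_div_two h0 (by linarith) h1).le
  · rfl

/-- A primitive of `sin x * log (cot (x / 2)) = -(sin x * log (tan (x / 2)))`, from integration by
parts against `1 - cos x`, the primitive of `sin` vanishing to second order at `0`. -/
noncomputable def logCotHalfPrimitive (x : ℝ) : ℝ :=
  -((1 - cos x) * log (tan (x / 2))) - log ((1 + cos x) / 2)

lemma hasDerivAt_logCotHalfPrimitive {x : ℝ} (hx : sin x ≠ 0) :
    HasDerivAt logCotHalfPrimitive (-(sin x * log (tan (x / 2)))) x := by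
  have hcos : 1 + cos x ≠ 0 := by
    intro h
    apply hx
    nlinarith [sin_sq_add_cos_sq x]
  have := (((hasDerivAt_cos x).const_sub 1).fun_mul (hasDerivAt_log_tan_half hx)).fun_neg.fun_sub
    ((((hasDerivAt_cos x).const_add 1).div_const 2).log (by positivity))
  refine this.congr_deriv ?_
  field_simp
  linear_combination sin_sq_add_cos_sq x

lemma continuousOn_logCotHalfPrimitive :
    ContinuousOn logCotHalfPrimitive {x | cos (x / 2) ≠ 0} := by
  have htan : ContinuousOn (fun x => tan (x / 2)) {x | cos (x / 2) ≠ 0} :=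
    continuousOn_tan.comp (by fun_prop) fun _ hx => hx
  have hcos : ∀ x ∈ {x | cos (x / 2) ≠ 0}, (1 + cos x) / 2 ≠ 0 := fun x hx => by
    rw [show (1 + cos x) / 2 = cos (x / 2) ^ 2 by rw [cos_sq]; ring_nf]
    exact pow_ne_zero 2 hx
  refine ContinuousOn.congr (f := fun x => -(sin x * (tan (x / 2) * log (tan (x / 2)))) -
    log ((1 + cos x) / 2)) ?_ fun x hx => ?_
  · exact (continuous_sin.continuousOn.mul (continuous_mul_log.comp_continuousOn htan)).neg.sub
      ((by fun_prop : Continuous fun x => (1 + cos x) / 2).continuousOn.log hcos)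
  · simp only [logCotHalfPrimitive, one_sub_cos_eq_sin_mul_tan_half hx]
    ring

lemma logCotHalfPrimitive_zero : logCotHalfPrimitive 0 = 0 := by simp [logCotHalfPrimitive]

lemma logCotHalfPrimitive_pi_div_two : logCotHalfPrimitive (π / 2) = log 2 := by
  simp [logCotHalfPrimitive, show π / 2 / 2 = π / 4 by ring, tan_pi_div_four]

theorem double_integral_eq_log_two :
    ∫ x in (0:ℝ)..(π/2), Real.sin x * ∫ t in x..(π/2), 1 / Real.sin t = Real.log 2 := by
  have h0 : (0 : ℝ) ≤ π / 2 := by positivity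
  have hsin : ∀ x ∈ Ioo 0 (π / 2), 0 < sin x := fun x hx =>
    sin_pos_of_pos_of_lt_pi hx.1 (by linarith [hx.2])
  have inner : EqOn (fun x => sin x * ∫ t in x..π / 2, 1 / sin t)
      (fun x => -(sin x * log (tan (x / 2)))) (uIcc 0 (π / 2)) := by
    rw [uIcc_of_le h0]
    rintro x ⟨hx0, hx1⟩
    rcases hx0.eq_or_lt with rfl | hx0
    · simp
    · simp only [integral_one_div_sin_to_pi_div_two hx0 hx1, mul_neg]
  have hcont : ContinuousOn logCotHalfPrimitive (Icc 0 (π / 2)) :=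
    continuousOn_logCotHalfPrimitive.mono fun x hx =>
      (cos_pos_of_mem_Ioo ⟨by linarith [hx.1, pi_pos], by linarith [hx.2, pi_pos]⟩).ne'
  have hderiv : ∀ x ∈ Ioo 0 (π / 2),
      HasDerivAt logCotHalfPrimitive (-(sin x * log (tan (x / 2)))) x :=
    fun x hx => hasDerivAt_logCotHalfPrimitive (hsin x hx).ne'
  have hnonneg : ∀ x ∈ Ioo 0 (π / 2), 0 ≤ -(sin x * log (tan (x / 2))) := fun x hx =>
    neg_nonneg.2 (mul_nonpos_of_nonneg_of_nonpos (hsin x hx).le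
      (log_tan_nonpos (by linarith [hx.1]) (by linarith [hx.2])))
  have hint : IntervalIntegrable (fun x => -(sin x * log (tan (x / 2)))) volume 0 (π / 2) := by
    refine intervalIntegrable_deriv_of_nonneg (g := logCotHalfPrimitive) ?_ ?_ ?_ <;>
      simpa only [uIcc_of_le h0, min_eq_left h0, max_eq_right h0]
  rw [integral_congr inner, integral_eq_sub_of_hasDerivAt_of_le h0 hcont hderiv hint,
    logCotHalfPrimitive_pi_div_two, logCotHalfPrimitive_zero, sub_zero]
end

section
/- For m an integer with |m| ≥ 2, the function q̂(θ) = (m/sin θ − b/2)² − (1/4)(cos²θ/sin²θ) − 1/2 satisfies: there exists a constant C ∈ ℝ and ε > 0 such that q̂(θ) ≥ C + (3/4)/θ² for all θ ∈ (0, ε). -/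
open Real

theorem liouville_potential_lower_bound (m : ℤ) (hm : 2 ≤ |m|) (b : ℝ) :
    ∃ C : ℝ, ∃ ε > 0, ∀ θ ∈ Set.Ioo (0:ℝ) ε,
      ((m : ℝ) / Real.sin θ - b / 2) ^ 2
        - (1 / 4) * ((Real.cos θ) ^ 2 / (Real.sin θ) ^ 2) - 1 / 2
        ≥ C + (3 / 4) / θ ^ 2 := by
  refine ⟨b ^ 2 / 4 - 1 / 2 - (b * m) ^ 2 / 2, 1, one_pos, ?_⟩
  rintro θ ⟨h0, h1⟩
  have hm2 : (4 : ℝ) ≤ (m : ℝ) ^ 2 := by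
    have h2 : (2 : ℝ) ≤ |(m : ℝ)| := by
      rw [← Int.cast_abs]; exact_mod_cast hm
    nlinarith [sq_abs (m : ℝ), abs_nonneg (m : ℝ)]
  have hπ : θ < Real.pi := lt_trans h1 (by linarith [Real.pi_gt_three])
  have hs : 0 < Real.sin θ := Real.sin_pos_of_pos_of_lt_pi h0 hπ
  have hsθ : Real.sin θ ≤ θ := le_of_lt (Real.sin_lt h0)
  have hs2 : (0 : ℝ) < Real.sin θ ^ 2 := by positivity
  have hθ2 : (0 : ℝ) < θ ^ 2 := by positivity
  have hcos : Real.cos θ ^ 2 = 1 - Real.sin θ ^ 2 := Real.cos_sq' θ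
  have hdiv : (3 / 4 : ℝ) / θ ^ 2 ≤ (3 / 4) / Real.sin θ ^ 2 := by
    gcongr
  set u : ℝ := 1 / Real.sin θ with hu
  have hsu : Real.sin θ * u = 1 := by
    rw [hu]; field_simp
  have e2 : ((m : ℝ) / Real.sin θ - b / 2) ^ 2
      = (m : ℝ) ^ 2 * u ^ 2 - b * (m : ℝ) * u + b ^ 2 / 4 := by
    rw [hu]; field_simp; ring
  have e1 : (1 - Real.sin θ ^ 2) / Real.sin θ ^ 2 = u ^ 2 - 1 := by
    rw [hu]; field_simp
  have e3 : (3 / 4 : ℝ) / Real.sin θ ^ 2 = (3 / 4) * u ^ 2 := by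
    rw [hu]; field_simp
  rw [hcos, e1, e2]
  have hkey : (m : ℝ) ^ 2 * u ^ 2 - b * (m : ℝ) * u + b ^ 2 / 4
      - (1 / 4) * (u ^ 2 - 1) - 1 / 2
      ≥ (b ^ 2 / 4 - 1 / 2 - (b * m) ^ 2 / 2) + (3 / 4) * u ^ 2 := by
    nlinarith [sq_nonneg (b * (m : ℝ) - u), sq_nonneg u]
  calc (m : ℝ) ^ 2 * u ^ 2 - b * (m : ℝ) * u + b ^ 2 / 4
      - (1 / 4) * (u ^ 2 - 1) - 1 / 2
      ≥ (b ^ 2 / 4 - 1 / 2 - (b * m) ^ 2 / 2) + (3 / 4) * u ^ 2 := hkey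
    _ ≥ (b ^ 2 / 4 - 1 / 2 - (b * m) ^ 2 / 2) + (3 / 4) / θ ^ 2 := by
        rw [← e3]; linarith
end
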